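/- arXiv:2210.03890 — 4 statements merged into one kernel-verified Lean document; each statement's English description precedes it below -/
import Mathlib

section
/- With N ≥ 1 units, binary treatments A_i ∈ {0,1}, outcomes Y_i ∈ ℝ, M ≥ 1 matches per unit drawn from the opposite treatment group, K_M(i) the number of times unit i is used as a match, and imputed potential outcomes Ŷ_i(A_i) = Y_i and Ŷ_i(1−A_i) = (1/M)·Σ_{j ∈ 𝒥_M(i)} Y_j, the simple matching estimator of the average treatment effect satisfies the exact identity (1/N)·Σ_{i=1}^N (Ŷ_i(1) − Ŷ_i(0)) = (1/N)·Σ_{i=1}^N (2A_i − 1)·(1 + K_M(i)/M)·Y_i. -/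
/-!
With `sᵢ = 2Aᵢ - 1 = ±1`, unit `i`'s imputed contrast is `sᵢ (Yᵢ - (1/M) ∑_{j ∈ 𝒥(i)} Yⱼ)`.
Matches lie in the opposite group, so `-sᵢ = sⱼ` and the contrast is
`sᵢ Yᵢ + (1/M) ∑_{j ∈ 𝒥(i)} sⱼ Yⱼ`. Summing over `i` and swapping the double sum, unit `j`
appears in the second term exactly `K_M(j)` times.
-/

open Finset

theorem sum_sum_eq_sum_card_filter_mem_mul {ι R : Type*} [Fintype ι] [DecidableEq ι]
    [NonAssocSemiring R] (J : ι → Finset ι) (f : ι → R) :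
    ∑ i, ∑ j ∈ J i, f j = ∑ j, ((univ.filter fun l => j ∈ J l).card : R) * f j := by
  rw [sum_comm' (t' := univ) (s' := fun j => univ.filter fun l => j ∈ J l) (by simp)]
  simp only [sum_const, nsmul_eq_mul]

theorem ite_sub_ite_eq_two_mul_sub_one_mul {a : ℕ} (ha : a = 0 ∨ a = 1) (y m : ℝ) :
    (if a = 1 then y else m) - (if a = 1 then m else y) = (2 * (a : ℝ) - 1) * (y - m) := by
  rcases ha with rfl | rfl <;> norm_num

theorem two_mul_sub_one_of_eq_one_sub {a b : ℕ} (ha : a = 0 ∨ a = 1) (hb : b = 1 - a) :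
    2 * (b : ℝ) - 1 = -(2 * (a : ℝ) - 1) := by
  rcases ha with rfl | rfl <;> subst hb <;> norm_num

theorem imputed_contrast_eq {ι : Type*} (M : ℕ) (A : ι → ℕ) (hA : ∀ i, A i = 0 ∨ A i = 1)
    (Y : ι → ℝ) (J : ι → Finset ι) (hJopp : ∀ i, ∀ j ∈ J i, A j = 1 - A i) (i : ι) :
    (if A i = 1 then Y i else (1 / (M : ℝ)) * ∑ j ∈ J i, Y j)
        - (if A i = 1 then (1 / (M : ℝ)) * ∑ j ∈ J i, Y j else Y i)
      = (2 * (A i : ℝ) - 1) * Y i + ∑ j ∈ J i, (2 * (A j : ℝ) - 1) / M * Y j := by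
  have hmatch : ∑ j ∈ J i, (2 * (A j : ℝ) - 1) / M * Y j
      = -(2 * (A i : ℝ) - 1) * ((1 / (M : ℝ)) * ∑ j ∈ J i, Y j) := by
    rw [mul_sum, mul_sum]
    refine sum_congr rfl fun j hj => ?_
    rw [two_mul_sub_one_of_eq_one_sub (hA i) (hJopp i j hj)]
    ring
  rw [ite_sub_ite_eq_two_mul_sub_one_mul (hA i), hmatch]
  ring

theorem matching_estimator_ate_identity_general
    (N M : ℕ)
    (A : Fin N → ℕ) (hA : ∀ i, A i = 0 ∨ A i = 1)
    (Y : Fin N → ℝ)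
    (J : Fin N → Finset (Fin N))
    (hJopp : ∀ i, ∀ j ∈ J i, A j = 1 - A i) :
    (1 / (N : ℝ)) *
        ∑ i, ((if A i = 1 then Y i else (1 / (M : ℝ)) * ∑ j ∈ J i, Y j)
          - (if A i = 1 then (1 / (M : ℝ)) * ∑ j ∈ J i, Y j else Y i))
      = (1 / (N : ℝ)) *
        ∑ i, (2 * (A i : ℝ) - 1) *
          (1 + ((Finset.univ.filter fun l => i ∈ J l).card : ℝ) / (M : ℝ)) * Y i := by
  congr 1
  rw [sum_congr rfl fun i _ => imputed_contrast_eq M A hA Y J hJopp i, sum_add_distrib,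
    sum_sum_eq_sum_card_filter_mem_mul, ← sum_add_distrib]
  refine sum_congr rfl fun i _ => ?_
  ring

/-- The simple matching estimator of the ATE, written as the average of
imputed contrasts `Ŷᵢ(1) − Ŷᵢ(0)`, equals the weighted-outcome form
`(1/N)·Σᵢ (2Aᵢ − 1)·(1 + K_M(i)/M)·Yᵢ`. -/
theorem matching_estimator_ate_identity
    (N M : ℕ) (hN : 1 ≤ N) (hM : 1 ≤ M)
    (A : Fin N → ℕ) (hA : ∀ i, A i = 0 ∨ A i = 1)
    (Y : Fin N → ℝ)
    (J : Fin N → Finset (Fin N))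
    (hJcard : ∀ i, (J i).card = M)
    (hJopp : ∀ i, ∀ j ∈ J i, A j = 1 - A i) :
    (1 / (N : ℝ)) *
        ∑ i, ((if A i = 1 then Y i else (1 / (M : ℝ)) * ∑ j ∈ J i, Y j)
          - (if A i = 1 then (1 / (M : ℝ)) * ∑ j ∈ J i, Y j else Y i))
      = (1 / (N : ℝ)) *
        ∑ i, (2 * (A i : ℝ) - 1) *
          (1 + ((Finset.univ.filter fun l => i ∈ J l).card : ℝ) / (M : ℝ)) * Y i :=
  matching_estimator_ate_identity_general N M A hA Y J hJopp
end

section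
/- With N ≥ 1 units, binary treatments A_i ∈ {0,1}, outcomes Y_i ∈ ℝ, covariates X_i ∈ 𝒳, M ≥ 1 matches per unit drawn from the opposite treatment group, K_M(i) the number of times unit i is used as a match, and ANY two functions μ₀, μ₁ : 𝒳 → ℝ, the matching estimator τ̂_mat := (1/N)·Σ_{i=1}^N (2A_i − 1)·(1 + K_M(i)/M)·Y_i decomposes exactly as τ̂_mat = τ̄ + E_M + B_M, where τ̄ = (1/N)·Σ_i (μ₁(X_i) − μ₀(X_i)), E_M = (1/N)·Σ_i (2A_i − 1)·(1 + K_M(i)/M)·(Y_i − μ_{A_i}(X_i)), and B_M = (1/N)·Σ_i (2A_i − 1)·(1/M)·Σ_{j ∈ 𝒥_M(i)} (μ_{1−A_i}(X_i) − μ_{1−A_i}(X_j)). -/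
open Finset

/-!
With `g i = 2 A i - 1`, `m i = μ_{A i}(X i)` and `m' i = μ_{1 - A i}(X i)`, one has
`μ₁ (X i) - μ₀ (X i) = g i * (m i - m' i)`. For a match `j ∈ J i` the signs are opposite,
`g i = -g j`, and `μ_{1 - A i}(X j) = m j`, so exchanging the order of summation in the bias term
turns `∑ i, g i * ∑ j ∈ J i, μ_{1 - A i}(X j)` into `-∑ j, K j * g j * m j`. The bias term thus
equals `∑ i, g i * m' i + (1 / M) * ∑ j, K j * g j * m j`, and the decomposition becomes an
identity between the summands.
-/

theorem sum_sum_mem_eq_sum_card_filter_smul {ι R : Type*} [Fintype ι] [DecidableEq ι]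
    [AddCommMonoid R] (J : ι → Finset ι) (f : ι → ι → R) (h : ι → R)
    (hf : ∀ i, ∀ j ∈ J i, f i j = h j) :
    ∑ i, ∑ j ∈ J i, f i j = ∑ j, #{l | j ∈ J l} • h j := by
  calc ∑ i, ∑ j ∈ J i, f i j
      = ∑ j, ∑ i ∈ {l | j ∈ J l}, f i j := by
        simpa using sum_comm' (fun i j => by simp)
    _ = ∑ j, #{l | j ∈ J l} • h j := by
        refine sum_congr rfl fun j _ => ?_
        rw [← sum_const]
        exact sum_congr rfl fun i hi => hf i j (mem_filter.mp hi).2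

section Treatment

variable {𝒳 : Type*} (μ₀ μ₁ : 𝒳 → ℝ)

theorem sub_eq_sign_mul_sub_ite {a : ℕ} (ha : a = 0 ∨ a = 1) (x : 𝒳) :
    μ₁ x - μ₀ x = (2 * (a : ℝ) - 1) *
      ((if a = 1 then μ₁ x else μ₀ x) - (if a = 1 then μ₀ x else μ₁ x)) := by
  rcases ha with rfl | rfl <;> norm_num

theorem sign_mul_ite_eq_neg_of_eq_one_sub {a b : ℕ} (ha : a = 0 ∨ a = 1) (hb : b = 1 - a)
    (x : 𝒳) :
    (2 * (a : ℝ) - 1) * (if a = 1 then μ₀ x else μ₁ x)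
      = -((2 * (b : ℝ) - 1) * (if b = 1 then μ₁ x else μ₀ x)) := by
  rcases ha with rfl | rfl <;> subst hb <;> norm_num

theorem sum_sign_mul_bias_eq {ι : Type*} [Fintype ι] [DecidableEq ι] {M : ℕ} (hM : M ≠ 0)
    (A : ι → ℕ) (hA : ∀ i, A i = 0 ∨ A i = 1) (X : ι → 𝒳) (J : ι → Finset ι)
    (hJcard : ∀ i, #(J i) = M) (hJopp : ∀ i, ∀ j ∈ J i, A j = 1 - A i) :
    ∑ i, (2 * (A i : ℝ) - 1) *
        ((1 / (M : ℝ)) * ∑ j ∈ J i,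
          ((if A i = 1 then μ₀ (X i) else μ₁ (X i)) - (if A i = 1 then μ₀ (X j) else μ₁ (X j))))
      = ∑ i, (2 * (A i : ℝ) - 1) * (if A i = 1 then μ₀ (X i) else μ₁ (X i))
        + (1 / (M : ℝ)) * ∑ j, (#{l | j ∈ J l} : ℝ) *
            ((2 * (A j : ℝ) - 1) * (if A j = 1 then μ₁ (X j) else μ₀ (X j))) := by
  have hM0 : (M : ℝ) ≠ 0 := Nat.cast_ne_zero.mpr hM
  have hswap : ∑ i, ∑ j ∈ J i, (2 * (A i : ℝ) - 1) * (if A i = 1 then μ₀ (X j) else μ₁ (X j))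
      = -∑ j, (#{l | j ∈ J l} : ℝ) *
          ((2 * (A j : ℝ) - 1) * (if A j = 1 then μ₁ (X j) else μ₀ (X j))) := by
    rw [sum_sum_mem_eq_sum_card_filter_smul J _
      (fun j => -((2 * (A j : ℝ) - 1) * (if A j = 1 then μ₁ (X j) else μ₀ (X j))))
      fun i j hj => sign_mul_ite_eq_neg_of_eq_one_sub μ₀ μ₁ (hA i) (hJopp i j hj) (X j)]
    simp only [nsmul_eq_mul, mul_neg, sum_neg_distrib]
  have hsummand : ∀ i, (2 * (A i : ℝ) - 1) *
        ((1 / (M : ℝ)) * ∑ j ∈ J i,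
          ((if A i = 1 then μ₀ (X i) else μ₁ (X i)) - (if A i = 1 then μ₀ (X j) else μ₁ (X j))))
      = (2 * (A i : ℝ) - 1) * (if A i = 1 then μ₀ (X i) else μ₁ (X i))
        - (1 / (M : ℝ)) *
          ∑ j ∈ J i, (2 * (A i : ℝ) - 1) * (if A i = 1 then μ₀ (X j) else μ₁ (X j)) := by
    intro i
    rw [sum_sub_distrib, sum_const, hJcard, nsmul_eq_mul, ← mul_sum]
    field_simp
  rw [sum_congr rfl fun i _ => hsummand i, sum_sub_distrib, ← mul_sum, hswap]
  ring

end Treatment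

theorem matching_estimator_ate_decomposition_general
    {𝒳 : Type*}
    (N M : ℕ) (hM : 1 ≤ M)
    (A : Fin N → ℕ) (hA : ∀ i, A i = 0 ∨ A i = 1)
    (Y : Fin N → ℝ) (X : Fin N → 𝒳)
    (J : Fin N → Finset (Fin N))
    (hJcard : ∀ i, (J i).card = M)
    (hJopp : ∀ i, ∀ j ∈ J i, A j = 1 - A i)
    (μ₀ μ₁ : 𝒳 → ℝ) :
    (1 / (N : ℝ)) *
        ∑ i, (2 * (A i : ℝ) - 1) *
          (1 + ((Finset.univ.filter fun l => i ∈ J l).card : ℝ) / (M : ℝ)) * Y i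
      = (1 / (N : ℝ)) * ∑ i, (μ₁ (X i) - μ₀ (X i))
        + (1 / (N : ℝ)) *
            ∑ i, (2 * (A i : ℝ) - 1) *
              (1 + ((Finset.univ.filter fun l => i ∈ J l).card : ℝ) / (M : ℝ)) *
              (Y i - (if A i = 1 then μ₁ (X i) else μ₀ (X i)))
        + (1 / (N : ℝ)) *
            ∑ i, (2 * (A i : ℝ) - 1) *
              ((1 / (M : ℝ)) *
                ∑ j ∈ J i,
                  ((if A i = 1 then μ₀ (X i) else μ₁ (X i))
                    - (if A i = 1 then μ₀ (X j) else μ₁ (X j)))) := by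
  rw [sum_sign_mul_bias_eq μ₀ μ₁ (by omega) A hA X J hJcard hJopp,
    sum_congr rfl fun i _ => sub_eq_sign_mul_sub_ite μ₀ μ₁ (hA i) (X i)]
  simp only [← mul_add, mul_sum, ← sum_add_distrib]
  exact sum_congr rfl fun i _ => by ring

/-- Exact decomposition of the simple ATE matching estimator,
`τ̂_mat = τ̄ + E_M + B_M`, for any functions `μ₀, μ₁ : 𝒳 → ℝ`. -/
theorem matching_estimator_ate_decomposition
    {𝒳 : Type*}
    (N M : ℕ) (hN : 1 ≤ N) (hM : 1 ≤ M)
    (A : Fin N → ℕ) (hA : ∀ i, A i = 0 ∨ A i = 1)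
    (Y : Fin N → ℝ) (X : Fin N → 𝒳)
    (J : Fin N → Finset (Fin N))
    (hJcard : ∀ i, (J i).card = M)
    (hJopp : ∀ i, ∀ j ∈ J i, A j = 1 - A i)
    (μ₀ μ₁ : 𝒳 → ℝ) :
    (1 / (N : ℝ)) *
        ∑ i, (2 * (A i : ℝ) - 1) *
          (1 + ((Finset.univ.filter fun l => i ∈ J l).card : ℝ) / (M : ℝ)) * Y i
      = (1 / (N : ℝ)) * ∑ i, (μ₁ (X i) - μ₀ (X i))
        + (1 / (N : ℝ)) *
            ∑ i, (2 * (A i : ℝ) - 1) *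
              (1 + ((Finset.univ.filter fun l => i ∈ J l).card : ℝ) / (M : ℝ)) *
              (Y i - (if A i = 1 then μ₁ (X i) else μ₀ (X i)))
        + (1 / (N : ℝ)) *
            ∑ i, (2 * (A i : ℝ) - 1) *
              ((1 / (M : ℝ)) *
                ∑ j ∈ J i,
                  ((if A i = 1 then μ₀ (X i) else μ₁ (X i))
                    - (if A i = 1 then μ₀ (X j) else μ₁ (X j)))) :=
  matching_estimator_ate_decomposition_general N M hM A hA Y X J hJcard hJopp μ₀ μ₁
end

section
/- With N ≥ 1 units, binary treatments A_i ∈ {0,1}, outcomes Y_i ∈ ℝ, covariates X_i ∈ 𝒳, N₁ := #{i : A_i = 1} > 0, M ≥ 1 control matches per treated unit, K_M(i) the number of treated units that use control unit i as a match, and ANY two functions μ₀, μ₁ : 𝒳 → ℝ, the ATT matching estimator τ̂ᵗ_mat := (1/N₁)·Σ_{i=1}^N (A_i − (1 − A_i)·K_M(i)/M)·Y_i decomposes exactly as τ̂ᵗ_mat = τ̄ᵗ + Eᵗ_M + Bᵗ_M, where τ̄ᵗ = (1/N₁)·Σ_i A_i·(μ₁(X_i) − μ₀(X_i)), Eᵗ_M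 = (1/N₁)·Σ_i (A_i − (1 − A_i)·K_M(i)/M)·(Y_i − μ_{A_i}(X_i)), and Bᵗ_M = (1/N₁)·Σ_i A_i·(1/M)·Σ_{j ∈ 𝒥_M(i)} (μ₀(X_i) − μ₀(X_j)). -/
open Finset

/-!
Write `w i = A i - (1 - A i) K_M(i) / M` for the estimator's weights, so that `τ̂ᵗ_mat - Eᵗ_M` is
`(1/N₁) ∑ w i μ_{A i}(X i)`. On the treated side this is `∑_treated μ₁(X i)`; on the control side,
counting pairs (treated `l`, control `j ∈ 𝒥_M(l)`) in two ways turns `∑_controls K_M(i) μ₀(X i)` into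
`∑_treated ∑_{j ∈ 𝒥_M(l)} μ₀(X j)`. Since each treated unit has exactly `M` matches, the remaining
difference is `τ̄ᵗ + Bᵗ_M`.
-/

theorem one_div_mul_sum_sub {ι : Type*} {s : Finset ι} (hs : s.Nonempty) (a : ℝ) (g : ι → ℝ) :
    1 / (#s : ℝ) * ∑ j ∈ s, (a - g j) = a - (∑ j ∈ s, g j) / #s := by
  have : (#s : ℝ) ≠ 0 := by exact_mod_cast hs.card_ne_zero
  rw [sum_sub_distrib, sum_const, nsmul_eq_mul]
  field_simp

theorem sum_card_filter_mem_nsmul {ι κ R : Type*} [Fintype ι] [Fintype κ] [DecidableEq ι]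
    [AddCommMonoid R] (p : κ → Prop) [DecidablePred p] (J : κ → Finset ι) (f : ι → R) :
    ∑ i, #{l | p l ∧ i ∈ J l} • f i = ∑ l with p l, ∑ j ∈ J l, f j := by
  rw [sum_comm' (t' := univ) (s' := fun i => {l | p l ∧ i ∈ J l}) (by simp)]
  simp only [sum_const]

section Matching

variable {ι : Type*} [Fintype ι] {M : ℕ} {A : ι → ℕ} {J : ι → Finset ι}

theorem sum_filter_eq_one_eq_sum_mul (hA : ∀ i, A i = 0 ∨ A i = 1) (f : ι → ℝ) :
    ∑ i with A i = 1, f i = ∑ i, (A i : ℝ) * f i := by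
  rw [sum_filter]
  refine sum_congr rfl fun i _ => ?_
  rcases hA i with h | h <;> simp [h]

variable [DecidableEq ι]

/-- The paper's `K_M(i)`. -/
def matchCount (A : ι → ℕ) (J : ι → Finset ι) (i : ι) : ℕ := #{l | A l = 1 ∧ i ∈ J l}

noncomputable def matchWeight (M : ℕ) (A : ι → ℕ) (J : ι → Finset ι) (i : ι) : ℝ :=
  A i - (1 - A i) * matchCount A J i / M

theorem sum_one_sub_mul_matchCount_mul (hA : ∀ i, A i = 0 ∨ A i = 1)
    (hJctrl : ∀ i, A i = 1 → ∀ j ∈ J i, A j = 0) (g : ι → ℝ) :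
    ∑ i, (1 - (A i : ℝ)) * matchCount A J i * g i = ∑ l, (A l : ℝ) * ∑ j ∈ J l, g j := by
  have hcontrol : ∀ l ∈ ({l | A l = 1} : Finset ι),
      ∑ j ∈ J l, (1 - (A j : ℝ)) * g j = ∑ j ∈ J l, g j := fun l hl =>
    sum_congr rfl fun j hj => by simp [hJctrl l (mem_filter.mp hl).2 j hj]
  rw [← sum_filter_eq_one_eq_sum_mul hA, ← sum_congr rfl hcontrol, ← sum_card_filter_mem_nsmul]
  refine sum_congr rfl fun i _ => ?_
  rw [nsmul_eq_mul, matchCount]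
  ring

theorem sum_matchWeight_mul_regression {𝒳 : Type*} (hM : M ≠ 0) (hA : ∀ i, A i = 0 ∨ A i = 1)
    (hJcard : ∀ i, A i = 1 → #(J i) = M) (hJctrl : ∀ i, A i = 1 → ∀ j ∈ J i, A j = 0)
    (X : ι → 𝒳) (μ₀ μ₁ : 𝒳 → ℝ) :
    ∑ i, matchWeight M A J i * (if A i = 1 then μ₁ (X i) else μ₀ (X i))
      = ∑ i, (A i : ℝ) * (μ₁ (X i) - μ₀ (X i))
        + ∑ i, (A i : ℝ) * (1 / (M : ℝ) * ∑ j ∈ J i, (μ₀ (X i) - μ₀ (X j))) := by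
  have hweight : ∀ i, matchWeight M A J i * (if A i = 1 then μ₁ (X i) else μ₀ (X i))
      = A i * μ₁ (X i) - (1 - (A i : ℝ)) * matchCount A J i * μ₀ (X i) / M := by
    intro i
    rcases hA i with h | h <;> simp [matchWeight, h]
    ring
  have hbias : ∀ i, (A i : ℝ) * (1 / (M : ℝ) * ∑ j ∈ J i, (μ₀ (X i) - μ₀ (X j)))
      = A i * μ₀ (X i) - A i * (∑ j ∈ J i, μ₀ (X j)) / M := by
    intro i
    rcases hA i with h | h
    · simp [h]
    · obtain rfl := hJcard i h
      rw [one_div_mul_sum_sub (card_ne_zero.mp hM)]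
      simp only [h]
      ring
  simp only [hweight, hbias]
  simp only [mul_sub, sum_sub_distrib, ← sum_div, sum_one_sub_mul_matchCount_mul hA hJctrl]
  ring

end Matching

theorem matching_estimator_att_decomposition_general
    {𝒳 : Type*}
    (N M : ℕ) (hM : 1 ≤ M)
    (A : Fin N → ℕ) (hA : ∀ i, A i = 0 ∨ A i = 1)
    (Y : Fin N → ℝ) (X : Fin N → 𝒳)
    (J : Fin N → Finset (Fin N))
    (hJcard : ∀ i, A i = 1 → (J i).card = M)
    (hJctrl : ∀ i, A i = 1 → ∀ j ∈ J i, A j = 0)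
    (N₁ : ℕ)
    (μ₀ μ₁ : 𝒳 → ℝ) :
    (1 / (N₁ : ℝ)) *
        ∑ i, ((A i : ℝ)
            - (1 - (A i : ℝ)) *
              ((Finset.univ.filter fun l => A l = 1 ∧ i ∈ J l).card : ℝ) / (M : ℝ)) * Y i
      = (1 / (N₁ : ℝ)) * ∑ i, (A i : ℝ) * (μ₁ (X i) - μ₀ (X i))
        + (1 / (N₁ : ℝ)) *
            ∑ i, ((A i : ℝ)
                - (1 - (A i : ℝ)) *
                  ((Finset.univ.filter fun l => A l = 1 ∧ i ∈ J l).card : ℝ) / (M : ℝ)) *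
              (Y i - (if A i = 1 then μ₁ (X i) else μ₀ (X i)))
        + (1 / (N₁ : ℝ)) *
            ∑ i, (A i : ℝ) *
              ((1 / (M : ℝ)) * ∑ j ∈ J i, (μ₀ (X i) - μ₀ (X j))) := by
  have hregression :=
    sum_matchWeight_mul_regression (by omega) hA hJcard hJctrl X μ₀ μ₁
  have hsplit := sum_congr (s₁ := univ) rfl fun i _ =>
    mul_sub (matchWeight M A J i) (Y i) (if A i = 1 then μ₁ (X i) else μ₀ (X i))
  rw [sum_sub_distrib] at hsplit
  simp only [matchWeight, matchCount] at hregression hsplit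
  linear_combination (1 / (N₁ : ℝ)) * (hregression - hsplit)

/-- Exact decomposition of the simple ATT matching estimator,
`τ̂ᵗ_mat = τ̄ᵗ + Eᵗ_M + Bᵗ_M`, for any functions `μ₀, μ₁ : 𝒳 → ℝ`. -/
theorem matching_estimator_att_decomposition
    {𝒳 : Type*}
    (N M : ℕ) (hN : 1 ≤ N) (hM : 1 ≤ M)
    (A : Fin N → ℕ) (hA : ∀ i, A i = 0 ∨ A i = 1)
    (Y : Fin N → ℝ) (X : Fin N → 𝒳)
    (J : Fin N → Finset (Fin N))
    (hJcard : ∀ i, A i = 1 → (J i).card = M)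
    (hJctrl : ∀ i, A i = 1 → ∀ j ∈ J i, A j = 0)
    (N₁ : ℕ) (hN₁def : N₁ = (Finset.univ.filter fun i => A i = 1).card)
    (hN₁pos : 0 < N₁)
    (μ₀ μ₁ : 𝒳 → ℝ) :
    (1 / (N₁ : ℝ)) *
        ∑ i, ((A i : ℝ)
            - (1 - (A i : ℝ)) *
              ((Finset.univ.filter fun l => A l = 1 ∧ i ∈ J l).card : ℝ) / (M : ℝ)) * Y i
      = (1 / (N₁ : ℝ)) * ∑ i, (A i : ℝ) * (μ₁ (X i) - μ₀ (X i))
        + (1 / (N₁ : ℝ)) *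
            ∑ i, ((A i : ℝ)
                - (1 - (A i : ℝ)) *
                  ((Finset.univ.filter fun l => A l = 1 ∧ i ∈ J l).card : ℝ) / (M : ℝ)) *
              (Y i - (if A i = 1 then μ₁ (X i) else μ₀ (X i)))
        + (1 / (N₁ : ℝ)) *
            ∑ i, (A i : ℝ) *
              ((1 / (M : ℝ)) * ∑ j ∈ J i, (μ₀ (X i) - μ₀ (X j))) :=
  matching_estimator_att_decomposition_general N M hM A hA Y X J hJcard hJctrl N₁ μ₀ μ₁
end

section
/- In the clustered ATT matching setup where treatment is assigned at the cluster level and only treated units are matched to control units, for ANY two functions μ₀, μ₁ : 𝒮 → ℝ of the covariates S_i, the clustered ATT matching estimator τ̂ᵗ_mat := (1/N₁)·Σ_{i=1}^N (A_{c(i)} − (1 − A_{c(i)})·K_M(i)/M)·Y_i decomposes exactly as τ̂ᵗ_mat = τ̄ᵗ + Eᵗ_M + Bᵗ_M, where τ̄ᵗ = (1/N₁)·Σ_i A_{c(i)}·(μ₁(S_i) − μ₀(S_i)), Eᵗ_M = (1/N₁)·Σ_i (A_{c(i)} − (1 − A_{c(i)})·K_M(i)/M)·(Y_i − μ_{A_{c(i)}}(S_i)),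 and Bᵗ_M = (1/N₁)·Σ_i A_{c(i)}·(1/M)·Σ_{j ∈ 𝒥_M(i)} (μ₀(S_i) − μ₀(S_j)). -/
/-!
Write `w i` for the matching weight of unit `i` and `m i := μ_{A_{c(i)}}(S_i)`. Since
`Σ w Y = Σ w (Y - m) + Σ w m`, it suffices to show `Σ w m = τ̄ᵗ + Bᵗ_M` (up to the factor `N₁`).
A treated unit has weight `1`, a control unit weight `-K_M(i)/M`, so the only non-trivial point
is the double count `Σ_{i control} K_M(i) μ₀(S_i) = Σ_{l treated} Σ_{j ∈ 𝒥_M(l)} μ₀(S_j)`, both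
sides summing `μ₀(S_j)` over the matched pairs `(l, j)`. Clustering plays no role: the identity
holds for any unit-level binary treatment.
-/

open Finset

namespace Matching

variable {ι : Type*} [Fintype ι] [DecidableEq ι] (a : ι → ℕ) (J : ι → Finset ι)

def matchCount (i : ι) : ℕ := #{l | a l = 1 ∧ i ∈ J l}

noncomputable def matchingWeight (M : ℕ) (i : ι) : ℝ := a i - (1 - a i) * matchCount a J i / M

theorem sum_matchCount_mul {R : Type*} [CommSemiring R] (f : ι → R) :
    ∑ i, (matchCount a J i : R) * f i = ∑ l with a l = 1, ∑ j ∈ J l, f j := by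
  simp only [matchCount, card_filter, Nat.cast_sum, Nat.cast_ite, Nat.cast_one, Nat.cast_zero,
    sum_mul, ite_mul, one_mul, zero_mul]
  rw [sum_comm, sum_filter]
  refine sum_congr rfl fun l _ => ?_
  split_ifs with hl <;> simp [hl, sum_ite_mem]

variable {a J}

theorem matchCount_eq_zero (hJctrl : ∀ l, a l = 1 → ∀ j ∈ J l, a j = 0) {i : ι} (hi : a i ≠ 0) :
    matchCount a J i = 0 :=
  card_eq_zero.mpr <| filter_eq_empty_iff.mpr fun l _ hl => hi (hJctrl l hl.1 i hl.2)

variable {M : ℕ}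

theorem sum_one_sub_mul_matchCount_mul (ha : ∀ i, a i = 0 ∨ a i = 1)
    (hJctrl : ∀ l, a l = 1 → ∀ j ∈ J l, a j = 0) (f : ι → ℝ) :
    ∑ i, (1 - (a i : ℝ)) * matchCount a J i * f i = ∑ l, (a l : ℝ) * ∑ j ∈ J l, f j := by
  have hcontrol : ∀ i, (1 - (a i : ℝ)) * matchCount a J i = matchCount a J i := fun i => by
    rcases ha i with hi | hi
    · simp [hi]
    · simp [matchCount_eq_zero hJctrl (hi.trans_ne one_ne_zero)]
  have htreated : ∀ l, (a l : ℝ) * ∑ j ∈ J l, f j = if a l = 1 then ∑ j ∈ J l, f j else 0 :=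
    fun l => by rcases ha l with hl | hl <;> simp [hl]
  simp only [hcontrol, htreated, sum_matchCount_mul, sum_filter]

theorem sum_matchingWeight_mul_ite (ha : ∀ i, a i = 0 ∨ a i = 1)
    (hJcard : ∀ l, a l = 1 → #(J l) = M) (hJctrl : ∀ l, a l = 1 → ∀ j ∈ J l, a j = 0)
    (hM : M ≠ 0) (g₀ g₁ : ι → ℝ) :
    ∑ i, matchingWeight a J M i * (if a i = 1 then g₁ i else g₀ i)
      = ∑ i, (a i : ℝ) * (g₁ i - g₀ i)
        + ∑ i, (a i : ℝ) * ((1 / (M : ℝ)) * ∑ j ∈ J i, (g₀ i - g₀ j)) := by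
  have hweight : ∀ i, matchingWeight a J M i * (if a i = 1 then g₁ i else g₀ i)
      = a i * g₁ i - (1 / (M : ℝ)) * ((1 - (a i : ℝ)) * matchCount a J i * g₀ i) := fun i => by
    rcases ha i with hi | hi
    · simp only [matchingWeight, hi]
      push_cast
      ring
    · simp [matchingWeight, hi]
  have hbias : ∀ i, (a i : ℝ) * (g₁ i - g₀ i) + a i * ((1 / (M : ℝ)) * ∑ j ∈ J i, (g₀ i - g₀ j))
      = a i * g₁ i - (1 / (M : ℝ)) * (a i * ∑ j ∈ J i, g₀ j) := fun i => by
    rcases ha i with hi | hi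
    · simp [hi]
    · have hM' : (M : ℝ) ≠ 0 := Nat.cast_ne_zero.mpr hM
      simp only [hi, sum_sub_distrib, sum_const, hJcard i hi, nsmul_eq_mul]
      field_simp
      ring
  rw [← sum_add_distrib]
  simp only [hweight, hbias]
  rw [sum_sub_distrib, sum_sub_distrib, ← mul_sum, ← mul_sum,
    sum_one_sub_mul_matchCount_mul ha hJctrl]

theorem sum_matchingWeight_mul_eq_add_add (ha : ∀ i, a i = 0 ∨ a i = 1)
    (hJcard : ∀ l, a l = 1 → #(J l) = M) (hJctrl : ∀ l, a l = 1 → ∀ j ∈ J l, a j = 0)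
    (hM : M ≠ 0) (Y g₀ g₁ : ι → ℝ) :
    ∑ i, matchingWeight a J M i * Y i
      = ∑ i, (a i : ℝ) * (g₁ i - g₀ i)
        + ∑ i, matchingWeight a J M i * (Y i - if a i = 1 then g₁ i else g₀ i)
        + ∑ i, (a i : ℝ) * ((1 / (M : ℝ)) * ∑ j ∈ J i, (g₀ i - g₀ j)) := by
  have hsplit : ∑ i, matchingWeight a J M i * Y i
      = ∑ i, matchingWeight a J M i * (Y i - if a i = 1 then g₁ i else g₀ i)
        + ∑ i, matchingWeight a J M i * (if a i = 1 then g₁ i else g₀ i) := by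
    rw [← sum_add_distrib]
    exact sum_congr rfl fun i _ => by ring
  rw [hsplit, sum_matchingWeight_mul_ite ha hJcard hJctrl hM]
  ring

end Matching

theorem clustered_matching_estimator_att_decomposition_general
    {𝒮 : Type*}
    (N R M : ℕ) (hM : 1 ≤ M)
    (c : Fin N → Fin R)
    (A : Fin R → ℕ) (hA : ∀ r, A r = 0 ∨ A r = 1)
    (Y : Fin N → ℝ) (S : Fin N → 𝒮)
    (J : Fin N → Finset (Fin N))
    (hJcard : ∀ i, A (c i) = 1 → (J i).card = M)
    (hJctrl : ∀ i, A (c i) = 1 → ∀ j ∈ J i, A (c j) = 0)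
    (N₁ : ℕ)
    (μ₀ μ₁ : 𝒮 → ℝ) :
    (1 / (N₁ : ℝ)) *
        ∑ i, ((A (c i) : ℝ)
            - (1 - (A (c i) : ℝ)) *
              ((Finset.univ.filter fun l => A (c l) = 1 ∧ i ∈ J l).card : ℝ) / (M : ℝ)) * Y i
      = (1 / (N₁ : ℝ)) * ∑ i, (A (c i) : ℝ) * (μ₁ (S i) - μ₀ (S i))
        + (1 / (N₁ : ℝ)) *
            ∑ i, ((A (c i) : ℝ)
                - (1 - (A (c i) : ℝ)) *
                  ((Finset.univ.filter fun l => A (c l) = 1 ∧ i ∈ J l).card : ℝ) / (M : ℝ)) *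
              (Y i - (if A (c i) = 1 then μ₁ (S i) else μ₀ (S i)))
        + (1 / (N₁ : ℝ)) *
            ∑ i, (A (c i) : ℝ) *
              ((1 / (M : ℝ)) * ∑ j ∈ J i, (μ₀ (S i) - μ₀ (S j))) := by
  have h := Matching.sum_matchingWeight_mul_eq_add_add (a := fun i => A (c i)) (fun i => hA (c i))
    hJcard hJctrl (Nat.one_le_iff_ne_zero.mp hM) Y (μ₀ ∘ S) (μ₁ ∘ S)
  simp only [Matching.matchingWeight, Matching.matchCount, Function.comp_apply] at h
  rw [← mul_add, ← mul_add, h]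

/-- Exact decomposition of the clustered ATT matching estimator,
`τ̂ᵗ_mat = τ̄ᵗ + Eᵗ_M + Bᵗ_M`, for any functions `μ₀, μ₁ : 𝒮 → ℝ` of the covariates. -/
theorem clustered_matching_estimator_att_decomposition
    {𝒮 : Type*}
    (N R M : ℕ) (hN : 1 ≤ N) (hR : 1 ≤ R) (hM : 1 ≤ M)
    (c : Fin N → Fin R)
    (A : Fin R → ℕ) (hA : ∀ r, A r = 0 ∨ A r = 1)
    (Y : Fin N → ℝ) (S : Fin N → 𝒮)
    (J : Fin N → Finset (Fin N))
    (hJcard : ∀ i, A (c i) = 1 → (J i).card = M)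
    (hJctrl : ∀ i, A (c i) = 1 → ∀ j ∈ J i, A (c j) = 0)
    (N₁ : ℕ) (hN₁def : N₁ = (Finset.univ.filter fun i => A (c i) = 1).card)
    (hN₁pos : 0 < N₁)
    (μ₀ μ₁ : 𝒮 → ℝ) :
    (1 / (N₁ : ℝ)) *
        ∑ i, ((A (c i) : ℝ)
            - (1 - (A (c i) : ℝ)) *
              ((Finset.univ.filter fun l => A (c l) = 1 ∧ i ∈ J l).card : ℝ) / (M : ℝ)) * Y i
      = (1 / (N₁ : ℝ)) * ∑ i, (A (c i) : ℝ) * (μ₁ (S i) - μ₀ (S i))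
        + (1 / (N₁ : ℝ)) *
            ∑ i, ((A (c i) : ℝ)
                - (1 - (A (c i) : ℝ)) *
                  ((Finset.univ.filter fun l => A (c l) = 1 ∧ i ∈ J l).card : ℝ) / (M : ℝ)) *
              (Y i - (if A (c i) = 1 then μ₁ (S i) else μ₀ (S i)))
        + (1 / (N₁ : ℝ)) *
            ∑ i, (A (c i) : ℝ) *
              ((1 / (M : ℝ)) * ∑ j ∈ J i, (μ₀ (S i) - μ₀ (S j))) :=
  clustered_matching_estimator_att_decomposition_general N R M hM c A hA Y S J hJcard hJctrl N₁ μ₀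
    μ₁
end
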